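/- Let G be a connected graph on n vertices with diam(G) = 3. Then χρ(G) = n − m'(G) + 2, where m'(G) is the maximum, over all maximal independent sets A of G, of |A| + ω(D(G) − A), and ω(D(G) − A) denotes the clique number of the graph obtained from the diametrical graph D(G) by deleting the vertices of A. -/

import Mathlib

open SimpleGraph

/-- A packing `k`-coloring of `G`: colors in `{1,…,k}` and vertices of equal color `i`
are at distance greater than `i` (vertices in different components are unconstrained). -/
def IsPackingColoring {V : Type*} (G : SimpleGraph V) (k : ℕ) (c : V → ℕ) : Prop :=
  (∀ v, 1 ≤ c v ∧ c v ≤ k) ∧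
  ∀ u v, u ≠ v → c u = c v → G.Reachable u v → c u < G.dist u v

/-- A greedy packing `k`-coloring: a packing `k`-coloring that uses color `k` and in which
every vertex of color `i ≥ 2` has, for every `j < i`, a vertex of color `j`
at distance at most `j`. -/
def IsGreedyPackingColoring {V : Type*} (G : SimpleGraph V) (k : ℕ) (c : V → ℕ) : Prop :=
  IsPackingColoring G k c ∧ (∃ v, c v = k) ∧
  ∀ v, ∀ j, 1 ≤ j → j < c v → ∃ u, c u = j ∧ G.Reachable u v ∧ G.dist u v ≤ j

/-- The Grundy packing chromatic number: the largest `k` admitting a greedy packing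
`k`-coloring. -/
noncomputable def grundyPackingChromaticNumber {V : Type*} (G : SimpleGraph V) : ℕ :=
  sSup {k | ∃ c : V → ℕ, IsGreedyPackingColoring G k c}

/-- The packing chromatic number: the smallest `k` admitting a packing `k`-coloring. -/
noncomputable def packingChromaticNumber {V : Type*} (G : SimpleGraph V) : ℕ :=
  sInf {k | ∃ c : V → ℕ, IsPackingColoring G k c}

/-- `s` is an independent set of `G`. -/
def IsIndepFinset {V : Type*} (G : SimpleGraph V) (s : Finset V) : Prop :=
  ∀ u ∈ s, ∀ v ∈ s, ¬ G.Adj u v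

/-- `s` is a maximal independent set of `G`. -/
def IsMaxIndepFinset {V : Type*} (G : SimpleGraph V) (s : Finset V) : Prop :=
  IsIndepFinset G s ∧ ∀ t : Finset V, IsIndepFinset G t → s ⊆ t → s = t

/-- The independent domination number `i(G)`:
the minimum cardinality of a maximal independent set. -/
noncomputable def indepDomNum {V : Type*} (G : SimpleGraph V) [Fintype V] : ℕ :=
  sInf {n | ∃ s : Finset V, IsMaxIndepFinset G s ∧ s.card = n}

/-- The graph `G^ℓ`: same vertices, `u ∼ v` iff `u ≠ v` and `d_G(u,v) ≤ ℓ`. -/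
def distPow {V : Type*} (G : SimpleGraph V) (ℓ : ℕ) : SimpleGraph V where
  Adj u v := u ≠ v ∧ G.dist u v ≤ ℓ
  symm := by
    constructor
    rintro u v ⟨h1, h2⟩
    exact ⟨h1.symm, by rwa [SimpleGraph.dist_comm]⟩
  loopless := by constructor; rintro v ⟨h, _⟩; exact h rfl

/-- The graph `G(k)`: vertex set is `k` disjoint copies of `V(G)`, the copy `i : Fin k`
playing the role of `G^(i+1)`; the `k` copies of each vertex form a clique, and within the
`i`-th copy two distinct vertices are adjacent iff their distance in `G` is at most `i+1`. -/
def levelGraph {V : Type*} (G : SimpleGraph V) (k : ℕ) : SimpleGraph (V × Fin k) where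
  Adj p q := (p.1 = q.1 ∧ p.2 ≠ q.2) ∨
    (p.1 ≠ q.1 ∧ p.2 = q.2 ∧ G.dist p.1 q.1 ≤ (p.2 : ℕ) + 1)
  symm := by
    constructor
    rintro p q (⟨h1, h2⟩ | ⟨h1, h2, h3⟩)
    · exact Or.inl ⟨h1.symm, h2.symm⟩
    · refine Or.inr ⟨h1.symm, h2.symm, ?_⟩
      rw [SimpleGraph.dist_comm, ← h2]
      exact h3
  loopless := by constructor; rintro p (⟨_, h⟩ | ⟨h, _, _⟩) <;> exact h rfl

/-- `A` is a maximal independent set of the subgraph of `H` induced on `S`. -/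
def IsMaxIndepSetOn {V : Type*} (H : SimpleGraph V) (S : Set V) (A : Set V) : Prop :=
  A ⊆ S ∧ (∀ u ∈ A, ∀ v ∈ A, ¬ H.Adj u v) ∧
  ∀ B : Set V, B ⊆ S → (∀ u ∈ B, ∀ v ∈ B, ¬ H.Adj u v) → A ⊆ B → A = B

/-- The eccentricity of a vertex. -/
noncomputable def eccent {V : Type*} (G : SimpleGraph V) [Fintype V] (v : V) : ℕ :=
  Finset.univ.sup (fun u => G.dist v u)

/-- The radius of a graph. -/
noncomputable def graphRadius {V : Type*} (G : SimpleGraph V) [Fintype V] : ℕ :=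
  sInf (Set.range (eccent G))

/-- The diameter of a graph. -/
noncomputable def graphDiam {V : Type*} (G : SimpleGraph V) [Fintype V] : ℕ :=
  Finset.univ.sup (eccent G)

/-- The diametrical graph `D(G)`: `x ∼ y` iff `d_G(x,y) = diam(G)`. -/
noncomputable def diamGraph {V : Type*} (G : SimpleGraph V) [Fintype V] : SimpleGraph V where
  Adj u v := u ≠ v ∧ G.dist u v = graphDiam G
  symm := by
    constructor
    rintro u v ⟨h1, h2⟩
    exact ⟨h1.symm, by rwa [SimpleGraph.dist_comm]⟩
  loopless := by constructor; rintro v ⟨h, _⟩; exact h rfl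

/-- `Q` is a clique of the subgraph of `H` induced on `S`. -/
def IsCliqueFinsetOn {V : Type*} (H : SimpleGraph V) (S : Set V) (Q : Finset V) : Prop :=
  ↑Q ⊆ S ∧ ∀ u ∈ Q, ∀ v ∈ Q, u ≠ v → H.Adj u v

/-- `Q` is a maximal clique of the subgraph of `H` induced on `S`. -/
def IsMaxCliqueFinsetOn {V : Type*} (H : SimpleGraph V) (S : Set V) (Q : Finset V) : Prop :=
  IsCliqueFinsetOn H S Q ∧ ∀ R : Finset V, IsCliqueFinsetOn H S R → Q ⊆ R → Q = R

/-- The join `G ∨ H` of two graphs. -/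
def joinGraph {V W : Type*} (G : SimpleGraph V) (H : SimpleGraph W) :
    SimpleGraph (V ⊕ W) where
  Adj p q := match p, q with
    | .inl u, .inl v => G.Adj u v
    | .inr u, .inr v => H.Adj u v
    | .inl _, .inr _ => True
    | .inr _, .inl _ => True
  symm := by
    constructor
    rintro (u | u) (v | v) h
    · exact G.adj_symm h
    · trivial
    · trivial
    · exact H.adj_symm h
  loopless := by
    constructor
    rintro (u | u) h
    · exact G.irrefl h
    · exact H.irrefl h

/-- `K_{n,n}` minus a perfect matching: parts `{u_i}` and `{v_i}`, with `u_i ∼ v_j` iff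
`i ≠ j`. -/
def completeBipartiteMinusMatching (n : ℕ) : SimpleGraph (Fin n ⊕ Fin n) where
  Adj p q := match p, q with
    | .inl i, .inr j => i ≠ j
    | .inr i, .inl j => i ≠ j
    | _, _ => False
  symm := by constructor; rintro (i | i) (j | j) h <;> first | exact h.symm | exact h
  loopless := by constructor; rintro (i | i) h <;> exact h

/-!
In a packing colouring of a graph of diameter 3, colour class 1 is an independent set `A₁`,
colour class 2 is a clique of `D(G)` disjoint from it, and every colour `≥ 3` is used at most
once; since `G` has an edge, colour 2 is needed. This gives `χρ(G) ≥ n - m'(G) + 2` once one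
knows that `|A₁| + |A₂|` is bounded by `m'(G)` for every independent `A₁` (not only maximal ones):
extend `A₁` to a maximal independent set `A` and replace `A₂` by `A₂ \ A`. Conversely, colouring
an optimal pair `(A, Q)` with 1 and 2 and the remaining vertices with distinct colours `3, 4, …`
is a packing colouring.
-/

open Finset

section

variable {V : Type*}

lemma Finset.exists_injOn_lt_card (s : Finset V) :
    ∃ f : V → ℕ, Set.InjOn f s ∧ ∀ a ∈ s, f a < #s := by
  classical
  refine ⟨fun a => if h : a ∈ s then s.equivFin ⟨a, h⟩ else 0, ?_, fun a ha => by simp [ha]⟩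
  intro a ha b hb hab
  simp only [dif_pos (mem_coe.1 ha), dif_pos (mem_coe.1 hb), Fin.val_inj] at hab
  exact congrArg Subtype.val (s.equivFin.injective hab)

lemma IsIndepFinset.exists_isMaxIndepFinset_superset [Fintype V] {G : SimpleGraph V}
    {s : Finset V} (hs : IsIndepFinset G s) : ∃ t, IsMaxIndepFinset G t ∧ s ⊆ t := by
  classical
  let T := univ.filter fun t : Finset V => IsIndepFinset G t ∧ s ⊆ t
  obtain ⟨t, htT, hmax⟩ := T.exists_max_image card ⟨s, by simp [T, hs]⟩
  simp only [T, mem_filter, mem_univ, true_and] at htT hmax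
  exact ⟨t, ⟨htT.1, fun t' ht' htt' =>
    eq_of_subset_of_card_le htt' (hmax t' ⟨ht', htT.2.trans htt'⟩)⟩, htT.2⟩

lemma IsCliqueFinsetOn.disjoint {H : SimpleGraph V} {A Q : Finset V}
    (hQ : IsCliqueFinsetOn H (↑A)ᶜ Q) : Disjoint A Q :=
  disjoint_left.2 fun _ haA haQ => hQ.1 haQ haA

section Diameter

variable [Fintype V] (G : SimpleGraph V)

lemma dist_le_graphDiam (u v : V) : G.dist u v ≤ graphDiam G :=
  (le_sup (f := fun w => G.dist u w) (mem_univ v)).trans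
    (le_sup (f := _root_.eccent G) (mem_univ u))

lemma nontrivial_of_graphDiam_ne_zero (h : graphDiam G ≠ 0) : Nontrivial V := by
  by_contra hV
  rw [not_nontrivial_iff_subsingleton] at hV
  refine h (Nat.eq_zero_of_le_zero (Finset.sup_le fun u _ => Finset.sup_le fun v _ => ?_))
  simp [Subsingleton.elim u v]

def indepDiamCliqueSums : Set ℕ :=
  {t : ℕ | ∃ A Q : Finset V, IsMaxIndepFinset G A ∧
    IsCliqueFinsetOn (diamGraph G) (↑A)ᶜ Q ∧ t = A.card + Q.card}

/-- The parameter `m'(G)` of the paper. -/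
noncomputable def indepDiamCliqueNumber : ℕ :=
  sSup (indepDiamCliqueSums G)

lemma bddAbove_indepDiamCliqueSums : BddAbove (indepDiamCliqueSums G) := by
  classical
  refine ⟨Fintype.card V, ?_⟩
  rintro _ ⟨A, Q, -, hQ, rfl⟩
  rw [← card_union_of_disjoint hQ.disjoint]
  exact card_le_univ _

lemma exists_card_add_card_eq_indepDiamCliqueNumber :
    ∃ A Q : Finset V, IsMaxIndepFinset G A ∧ IsCliqueFinsetOn (diamGraph G) (↑A)ᶜ Q ∧
      #A + #Q = indepDiamCliqueNumber G := by
  obtain ⟨A, hA, -⟩ :=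
    (show IsIndepFinset G ∅ by simp [IsIndepFinset]).exists_isMaxIndepFinset_superset
  obtain ⟨A, Q, hA, hQ, h⟩ := Nat.sSup_mem (s := indepDiamCliqueSums G)
    ⟨_, A, ∅, hA, by simp [IsCliqueFinsetOn], rfl⟩ (bddAbove_indepDiamCliqueSums G)
  exact ⟨A, Q, hA, hQ, h.symm⟩

variable {G}

lemma card_add_card_le_indepDiamCliqueNumber {A Q : Finset V} (hA : IsIndepFinset G A)
    (hQ : IsCliqueFinsetOn (diamGraph G) (↑A)ᶜ Q) : #A + #Q ≤ indepDiamCliqueNumber G := by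
  classical
  obtain ⟨A', hA', hAA'⟩ := hA.exists_isMaxIndepFinset_superset
  have hQ' : IsCliqueFinsetOn (diamGraph G) (↑A')ᶜ (Q \ A') :=
    ⟨by simp, fun u hu v hv => hQ.2 u (mem_sdiff.1 hu).1 v (mem_sdiff.1 hv).1⟩
  calc #A + #Q = #(A ∪ Q) := (card_union_of_disjoint hQ.disjoint).symm
    _ ≤ #(Q ∪ A') :=
      card_le_card (union_subset (hAA'.trans subset_union_right) subset_union_left)
    _ = #A' + #(Q \ A') := by rw [← card_sdiff_add_card, add_comm]
    _ ≤ indepDiamCliqueNumber G :=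
      le_csSup (bddAbove_indepDiamCliqueSums G) ⟨A', _, hA', hQ', rfl⟩

end Diameter

section PackingColoring

variable {G : SimpleGraph V} {k : ℕ} {c : V → ℕ}

lemma IsPackingColoring.two_le {u v : V} (hc : IsPackingColoring G k c) (huv : G.Adj u v) :
    2 ≤ k := by
  by_contra! hk
  have hu := hc.1 u
  have hv := hc.1 v
  have := hc.2 u v huv.ne (by omega) huv.reachable
  rw [dist_eq_one_iff_adj.2 huv] at this
  omega

lemma IsPackingColoring.isIndepFinset_one [Fintype V] (hc : IsPackingColoring G k c) :
    IsIndepFinset G {v | c v = 1} := by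
  intro u hu v hv huv
  simp only [mem_filter, mem_univ, true_and] at hu hv
  have := hc.2 u v huv.ne (hu.trans hv.symm) huv.reachable
  rw [dist_eq_one_iff_adj.2 huv] at this
  omega

lemma IsPackingColoring.diamGraph_adj [Fintype V] (hc : IsPackingColoring G k c)
    (hG : G.Preconnected) {i : ℕ} (hi : i + 1 = graphDiam G) {u v : V} (huv : u ≠ v)
    (hu : c u = i) (hv : c v = i) : (diamGraph G).Adj u v := by
  have := hc.2 u v huv (hu.trans hv.symm) (hG u v)
  have := dist_le_graphDiam G u v
  exact ⟨huv, by omega⟩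

lemma IsPackingColoring.injOn_graphDiam_le [Fintype V] (hc : IsPackingColoring G k c)
    (hG : G.Preconnected) : Set.InjOn c {v | graphDiam G ≤ c v} := by
  intro u hu v _ huv
  by_contra hne
  have := hc.2 u v hne huv (hG u v)
  have := dist_le_graphDiam G u v
  simp only [Set.mem_ofPred_eq] at hu
  omega

lemma IsPackingColoring.card_graphDiam_le [Fintype V] (hc : IsPackingColoring G k c)
    (hG : G.Preconnected) : #{v | graphDiam G ≤ c v} ≤ k + 1 - graphDiam G := by
  rw [← Nat.card_Icc]
  refine card_le_card_of_injOn c (fun v hv => mem_Icc.2 ⟨(mem_filter.1 hv).2, (hc.1 v).2⟩)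
    fun u hu v hv => hc.injOn_graphDiam_le hG (mem_filter.1 hu).2 (mem_filter.1 hv).2

lemma exists_isPackingColoring_of_three_le_graphDiam [Fintype V] (h3 : 3 ≤ graphDiam G)
    {A Q : Finset V} (hA : IsIndepFinset G A) (hQ : IsCliqueFinsetOn (diamGraph G) (↑A)ᶜ Q) :
    ∃ c, IsPackingColoring G (Fintype.card V - (#A + #Q) + 2) c := by
  classical
  obtain ⟨f, hf, hf_lt⟩ := (A ∪ Q)ᶜ.exists_injOn_lt_card
  have hcard : #(A ∪ Q)ᶜ = Fintype.card V - (#A + #Q) := by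
    rw [card_compl, card_union_of_disjoint hQ.disjoint]
  refine ⟨fun v => if v ∈ A then 1 else if v ∈ Q then 2 else f v + 3, fun v => ?_,
    fun u v huv hcol hr => ?_⟩
  · have := hf_lt v
    dsimp only
    split_ifs <;> simp_all
  · dsimp only at hcol ⊢
    split_ifs at hcol ⊢ <;> try omega
    · rename_i huA hvA
      have := hr.pos_dist_of_ne huv
      have := mt dist_eq_one_iff_adj.1 (hA u huA v hvA)
      omega
    · rename_i huQ _ hvQ
      rw [(hQ.2 u huQ v hvQ huv).2]
      omega
    · rename_i huA huQ hvA hvQ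
      exact absurd (hf (by simp [huA, huQ]) (by simp [hvA, hvQ]) (by omega)) huv

lemma IsPackingColoring.card_sub_indepDiamCliqueNumber_add_two_le [Fintype V]
    (hc : IsPackingColoring G k c) (hG : G.Connected) (hd : graphDiam G = 3) :
    Fintype.card V - indepDiamCliqueNumber G + 2 ≤ k := by
  classical
  have : Nontrivial V := nontrivial_of_graphDiam_ne_zero G (by omega)
  obtain ⟨v, hv⟩ := hG.preconnected.exists_adj_of_nontrivial (Classical.arbitrary V)
  have hk := hc.two_le hv
  have h12 : #{v | c v = 1} + #{v | c v = 2} ≤ indepDiamCliqueNumber G := by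
    refine card_add_card_le_indepDiamCliqueNumber hc.isIndepFinset_one
      ⟨fun v hv => ?_, fun u hu v hv huv => ?_⟩
    · simp_all
    · simp only [mem_filter, mem_univ, true_and] at hu hv
      exact hc.diamGraph_adj hG.preconnected (by omega) huv hu hv
  have h3 := hc.card_graphDiam_le hG.preconnected
  rw [hd] at h3
  have hcover : (univ : Finset V) ⊆
      ({v | c v = 1} : Finset V) ∪ ({v | c v = 2} : Finset V) ∪ ({v | 3 ≤ c v} : Finset V) := by
    intro v _
    have := (hc.1 v).1
    simp only [mem_union, mem_filter, mem_univ, true_and]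
    omega
  have hn := (card_le_card hcover).trans (card_union_le _ _)
  have := card_union_le ({v | c v = 1} : Finset V) {v | c v = 2}
  rw [card_univ] at hn
  omega

end PackingColoring

end

/-- If `G` is connected on `n` vertices with `diam(G) = 3`, then
`χρ(G) = n - m'(G) + 2`, where `m'(G)` is the maximum over all maximal independent sets `A`
of `G` of `|A| + ω(D(G) - A)`. -/
theorem packingChromaticNumber_of_diam_three {V : Type*} [Fintype V] (G : SimpleGraph V)
    (hG : G.Connected) (hd : graphDiam G = 3) :
    packingChromaticNumber G =
      Fintype.card V -
        sSup {t : ℕ | ∃ A Q : Finset V, IsMaxIndepFinset G A ∧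
          IsCliqueFinsetOn (diamGraph G) (↑A)ᶜ Q ∧ t = A.card + Q.card} + 2 := by
  change packingChromaticNumber G = Fintype.card V - indepDiamCliqueNumber G + 2
  obtain ⟨A, Q, hA, hQ, hAQ⟩ := exists_card_add_card_eq_indepDiamCliqueNumber G
  obtain ⟨c, hc⟩ := exists_isPackingColoring_of_three_le_graphDiam hd.ge hA.1 hQ
  rw [hAQ] at hc
  exact le_antisymm (Nat.sInf_le ⟨c, hc⟩) <|
    le_csInf ⟨_, c, hc⟩ fun k ⟨c', hc'⟩ => hc'.card_sub_indepDiamCliqueNumber_add_two_le hG hd
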